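/- For N ≥ 2, the spectrum of the matrix C_N^quant with entries 1/sin(π(m+n-1)/N) (and 0 where sin(π(m+n-1)/N) = 0, i.e. on the anti-diagonal shifted appropriately) is exactly {N-1, N-3, ..., 3-N, 1-N}, the set of integers n with |n| < N and n ≡ N-1 (mod 2). -/

import Mathlib

open Finset Real Matrix

/-!
The vectors `w_l(n) = cos ((2l+1)π(2n+1)/(2N) - π/4)`, `0 ≤ l < N`, are eigenvectors of
`C_N^quant` for the `N` distinct eigenvalues `N - (2l+1)`, so these exhaust the spectrum.

With `j = m + n + 1`, the `m`-th entry of `C w_l` is the sum of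
`cos ((2l+1)πj/N - ψ_m) / sin (πj/N)` over `N` consecutive values of `j`, for a phase `ψ_m`
depending only on `m`. Both factors change sign under `j ↦ j + N`, so the window can be moved to
`0 ≤ j < N`. Expanding the cosine of the difference, the `cos ((2l+1)πj/N)` part cancels under
`j ↦ N - j`, and the `sin ((2l+1)πj/N)` part is a sum of Dirichlet kernels
`sin ((2l+1)x) / sin x = 1 + 2 ∑_{t<l} cos (2(t+1)x)`, which add up to `N` over all `j`, less
the missing `j = 0` term `2l + 1`.
-/

theorem Function.Periodic.sum_range_add {M : Type*} [AddCancelCommMonoid M] {f : ℕ → M} {N : ℕ}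
    (hf : Function.Periodic f N) (m : ℕ) : ∑ n ∈ range N, f (m + n) = ∑ n ∈ range N, f n := by
  induction m with
  | zero => simp
  | succ m ih =>
    rw [← ih]
    have h := (sum_range_succ' (fun n => f (m + n)) N).symm.trans (sum_range_succ _ N)
    rw [add_zero, hf m] at h
    simpa only [add_right_comm m 1, add_assoc] using add_right_cancel h

theorem Finset.sum_range_eq_zero_of_apply_sub_eq_neg {G : Type*} [AddCommGroup G]
    [IsAddTorsionFree G] {f : ℕ → G} {N : ℕ} (h0 : f 0 = 0) (hf : ∀ j ≤ N, f (N - j) = -f j) :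
    ∑ j ∈ range N, f j = 0 := by
  have hsum : ∑ j ∈ range (N + 1), f j = 0 := by
    refine self_eq_neg.1 ?_
    conv_lhs => rw [← sum_range_reflect]
    rw [← sum_neg_distrib]
    exact sum_congr rfl fun j hj => by
      rw [Nat.add_sub_cancel, hf j (Nat.lt_succ_iff.1 (mem_range.1 hj))]
  have hN : f N = 0 := by simpa [h0] using hf 0 (Nat.zero_le N)
  rwa [sum_range_succ, hN, add_zero] at hsum

/-- `sin ((2l+1)x) / sin x`, i.e. the Dirichlet kernel `D_l` evaluated at `2x`. -/
noncomputable def dirichletKernel (l : ℕ) (x : ℝ) : ℝ :=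
  1 + 2 * ∑ t ∈ range l, cos (2 * (t + 1) * x)

theorem sin_mul_dirichletKernel (l : ℕ) (x : ℝ) :
    sin x * dirichletKernel l x = sin ((2 * l + 1) * x) := by
  induction l with
  | zero => simp [dirichletKernel]
  | succ l ih =>
    have h := two_mul_sin_mul_cos x (2 * (l + 1) * x)
    rw [show x - 2 * (l + 1) * x = -((2 * l + 1) * x) by ring, sin_neg,
      show x + 2 * (l + 1) * x = (2 * (l + 1) + 1) * x by ring] at h
    simp only [dirichletKernel, sum_range_succ] at ih ⊢
    push_cast
    linear_combination ih + h

theorem two_mul_sin_mul_sum_cos (N : ℕ) (x : ℝ) :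
    2 * sin x * ∑ j ∈ range N, cos (2 * j * x) = sin ((2 * N - 1) * x) + sin x := by
  have h (j : ℕ) : 2 * sin x * cos (2 * j * x)
      = sin ((2 * (j + 1 : ℕ) - 1) * x) - sin ((2 * j - 1) * x) := by
    rw [two_mul_sin_mul_cos, show x - 2 * j * x = -((2 * j - 1) * x) by ring, sin_neg]
    push_cast
    ring_nf
  rw [mul_sum, sum_congr rfl fun j _ => h j,
    sum_range_sub (fun j : ℕ => sin ((2 * (j : ℝ) - 1) * x))]
  simp [sub_eq_add_neg, ← sin_neg]

theorem sin_pi_mul_div_pos {j N : ℕ} (hj0 : 0 < j) (hjN : j < N) : 0 < sin (π * j / N) := by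
  have hN : (0 : ℝ) < N := by exact_mod_cast hj0.trans hjN
  apply sin_pos_of_pos_of_lt_pi (by positivity)
  rw [div_lt_iff₀ hN]
  exact mul_lt_mul_of_pos_left (by exact_mod_cast hjN) pi_pos

theorem sum_range_cos_eq_zero {N s : ℕ} (hs0 : 0 < s) (hsN : s < N) :
    ∑ j ∈ range N, cos (2 * j * (π * s / N)) = 0 := by
  have hsin := sin_pi_mul_div_pos hs0 hsN
  have hN : (N : ℝ) ≠ 0 := by exact_mod_cast (hs0.trans hsN).ne'
  have hper : (2 * N - 1) * (π * s / N) = -(π * s / N) + s * (2 * π) := by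
    field_simp
    ring
  have h := two_mul_sin_mul_sum_cos N (π * s / N)
  rw [hper, sin_add_nat_mul_two_pi, sin_neg, neg_add_cancel] at h
  exact (mul_eq_zero.1 h).resolve_left (by positivity)

theorem sum_dirichletKernel {N l : ℕ} (hl : l < N) :
    ∑ j ∈ range N, dirichletKernel l (π * j / N) = N := by
  have hcos (t : ℕ) (ht : t ∈ range l) :
      ∑ j ∈ range N, cos (2 * (t + 1) * (π * j / N)) = 0 := by
    rw [← sum_range_cos_eq_zero (N := N) (Nat.succ_pos t) (by have := mem_range.1 ht; omega)]
    refine sum_congr rfl fun j _ => congrArg cos ?_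
    push_cast
    ring
  simp only [dirichletKernel, sum_add_distrib, ← mul_sum]
  rw [sum_comm, sum_congr rfl hcos]
  simp

theorem sum_inv_sin_mul_sin {N l : ℕ} (hl : l < N) :
    ∑ j ∈ range N, (sin (π * j / N))⁻¹ * sin ((2 * l + 1) * (π * j / N)) = N - (2 * l + 1) := by
  obtain ⟨n, rfl⟩ : ∃ n, N = n + 1 := ⟨N - 1, by omega⟩
  have hterm (j : ℕ) (hj : j ∈ range n) :
      (sin (π * (j + 1 : ℕ) / (n + 1 : ℕ)))⁻¹
        * sin ((2 * l + 1) * (π * (j + 1 : ℕ) / (n + 1 : ℕ)))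
        = dirichletKernel l (π * (j + 1 : ℕ) / (n + 1 : ℕ)) := by
    have hj' := mem_range.1 hj
    have hsin := (sin_pi_mul_div_pos (N := n + 1) (Nat.succ_pos j) (by omega)).ne'
    rw [← sin_mul_dirichletKernel, inv_mul_cancel_left₀ hsin]
  have hD0 : dirichletKernel l (π * (0 : ℕ) / (n + 1 : ℕ)) = 2 * l + 1 := by
    simp only [dirichletKernel, Nat.cast_zero, mul_zero, zero_div, cos_zero, sum_const,
      card_range, nsmul_eq_mul, mul_one]
    ring
  have hD := sum_dirichletKernel hl
  rw [sum_range_succ', hD0] at hD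
  rw [sum_range_succ', sum_congr rfl hterm]
  simp only [Nat.cast_zero, mul_zero, zero_div, sin_zero, _root_.inv_zero, add_zero]
  linarith

theorem sum_inv_sin_mul_cos_eq_zero (N l : ℕ) :
    ∑ j ∈ range N, (sin (π * j / N))⁻¹ * cos ((2 * l + 1) * (π * j / N)) = 0 := by
  rcases Nat.eq_zero_or_pos N with rfl | hN
  · simp
  refine sum_range_eq_zero_of_apply_sub_eq_neg (by simp) fun j hj => ?_
  have hrefl : π * (N - j : ℕ) / N = π - π * j / N := by
    rw [Nat.cast_sub hj]
    field_simp
  have hodd : (2 * l + 1) * (π - π * j / N) = π - (2 * l + 1) * (π * j / N) + l * (2 * π) := by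
    ring
  rw [hrefl, sin_pi_sub, hodd, cos_add_nat_mul_two_pi, cos_pi_sub, mul_neg]

theorem periodic_inv_sin_mul_cos {N : ℕ} (hN : N ≠ 0) (l : ℕ) (ψ : ℝ) :
    Function.Periodic
      (fun j : ℕ => (sin (π * j / N))⁻¹ * cos ((2 * l + 1) * (π * j / N) - ψ)) N := by
  intro j
  have hshift : π * (j + N : ℕ) / N = π * j / N + π := by
    push_cast
    field_simp
  have hodd : (2 * l + 1) * (π * j / N + π) - ψ
      = (2 * l + 1) * (π * j / N) - ψ + π + l * (2 * π) := by
    ring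
  simp only
  rw [hshift, sin_add_pi, hodd, cos_add_nat_mul_two_pi, cos_add_pi, inv_neg, neg_mul_neg]

theorem sum_inv_sin_mul_cos_sub {N l : ℕ} (hl : l < N) (ψ : ℝ) :
    ∑ j ∈ range N, (sin (π * j / N))⁻¹ * cos ((2 * l + 1) * (π * j / N) - ψ)
      = (N - (2 * l + 1)) * sin ψ := by
  simp only [cos_sub, mul_add, sum_add_distrib, ← mul_assoc, ← sum_mul,
    sum_inv_sin_mul_cos_eq_zero, sum_inv_sin_mul_sin hl, zero_mul, zero_add]

/-- `C_N^quant`: by the convention `0⁻¹ = 0`, the entries vanish where `sin` does. -/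
noncomputable def quantHilbert (N : ℕ) : Matrix (Fin N) (Fin N) ℝ :=
  of fun m n => (sin (π * ((m : ℕ) + (n : ℕ) + 1) / N))⁻¹

noncomputable def quantEigenvector (N l : ℕ) : Fin N → ℝ :=
  fun n => cos ((2 * l + 1) * (π * (2 * (n : ℕ) + 1) / (2 * N)) - π / 4)

theorem quantHilbert_mulVec_quantEigenvector {N l : ℕ} (hl : l < N) :
    quantHilbert N *ᵥ quantEigenvector N l = ((N : ℝ) - (2 * l + 1)) • quantEigenvector N l := by
  ext m
  set ψ : ℝ := (2 * l + 1) * (π * (2 * (m : ℕ) + 1) / (2 * N)) + π / 4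
  have hterm (n : ℕ) : (sin (π * ((m : ℕ) + n + 1) / N))⁻¹
      * cos ((2 * l + 1) * (π * (2 * n + 1) / (2 * N)) - π / 4)
      = (sin (π * ((m + 1 + n : ℕ) : ℝ) / N))⁻¹
        * cos ((2 * l + 1) * (π * ((m + 1 + n : ℕ) : ℝ) / N) - ψ) := by
    congr 1
    · congr 2; push_cast; ring
    · congr 1; simp only [ψ]; push_cast; field_simp; ring
  have hw : quantEigenvector N l m = sin ψ := by
    rw [quantEigenvector, ← cos_sub_pi_div_two]
    congr 1
    ring
  simp only [mulVec, dotProduct, quantHilbert, of_apply, quantEigenvector, Pi.smul_apply,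
    smul_eq_mul]
  rw [Fin.sum_univ_eq_sum_range (fun n => (sin (π * ((m : ℕ) + n + 1) / N))⁻¹
      * cos ((2 * l + 1) * (π * (2 * n + 1) / (2 * N)) - π / 4)), sum_congr rfl fun n _ => hterm n,
    (periodic_inv_sin_mul_cos (Nat.zero_lt_of_lt hl).ne' l ψ).sum_range_add,
    sum_inv_sin_mul_cos_sub hl, ← hw]
  rfl

/-- If the first entry vanishes then `2 (2l+1) = 3N`, and then the second entry is `cos 2π = 1`. -/
theorem quantEigenvector_ne_zero {N l : ℕ} (hl : l < N) : quantEigenvector N l ≠ 0 := by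
  have hN : (0 : ℝ) < N := by exact_mod_cast Nat.zero_lt_of_lt hl
  set x : ℝ := (2 * l + 1) * (π / (2 * N))
  have hx_lt : x < π := by
    have : (2 * l + 1 : ℝ) < 2 * N := by exact_mod_cast (by omega : 2 * l + 1 < 2 * N)
    calc x = (2 * l + 1) / (2 * N) * π := by ring
      _ < 1 * π := by gcongr; rwa [div_lt_one (by positivity)]
      _ = π := one_mul π
  intro hw
  have h0 : cos (x - π / 4) = 0 := by
    have := congrFun hw ⟨0, Nat.zero_lt_of_lt hl⟩
    simp only [quantEigenvector, Pi.zero_apply] at this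
    convert this using 3
    push_cast
    ring
  have hx : x = 3 * π / 4 := by
    rw [← sin_pi_div_two_sub, sin_eq_zero_iff_of_lt_of_lt (by linarith [pi_pos])
      (by linarith [show 0 < x by positivity])] at h0
    linarith
  have h3N : 2 * (2 * l + 1) = 3 * N := by
    have : (2 * (2 * l + 1) : ℝ) = 3 * N := by
      simp only [x] at hx
      field_simp at hx
      nlinarith [pi_pos]
    exact_mod_cast this
  have h1 := congrFun hw ⟨1, by omega⟩
  simp only [quantEigenvector, Pi.zero_apply] at h1
  rw [show (2 * l + 1) * (π * (2 * ((1 : ℕ) : ℝ) + 1) / (2 * N)) - π / 4 = 3 * x - π / 4 by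
    push_cast; ring, hx, show 3 * (3 * π / 4) - π / 4 = 2 * π by ring, cos_two_pi] at h1
  exact one_ne_zero h1

theorem Matrix.spectrum_eq_range_of_mulVec_eq_smul {K n ι : Type*} [Field K] [Fintype n]
    [DecidableEq n] [Fintype ι] {A : Matrix n n K} {μ : ι → K} (hμ : Function.Injective μ)
    {v : ι → n → K} (hv : ∀ i, A *ᵥ v i = μ i • v i) (hv0 : ∀ i, v i ≠ 0)
    (hcard : Fintype.card n ≤ Fintype.card ι) : spectrum K A = Set.range μ := by
  have hvec (i : ι) : Module.End.HasEigenvector (toLin' A) (μ i) (v i) :=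
    ⟨by rw [Module.End.mem_eigenspace_iff, toLin'_apply, hv], hv0 i⟩
  ext x
  rw [← spectrum_toLin', ← Module.End.hasEigenvalue_iff_mem_spectrum]
  refine ⟨fun hx => ?_, fun ⟨i, hi⟩ => hi ▸ Module.End.hasEigenvalue_of_hasEigenvector (hvec i)⟩
  by_contra hxμ
  obtain ⟨u, hu⟩ := hx.exists_hasEigenvector
  have hli := Module.End.eigenvectors_linearIndependent' (toLin' A) (Option.elim' x μ)
    (Option.injective_iff.2 ⟨hμ, hxμ⟩) (Option.elim' u v) (Option.rec hu hvec)
  have := hli.fintype_card_le_finrank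
  rw [Module.finrank_fintype_fun_eq_card, Fintype.card_option] at this
  omega

theorem range_natCast_sub_two_mul_add_one (N : ℕ) :
    Set.range (fun l : Fin N => (N : ℝ) - (2 * (l : ℕ) + 1))
      = {x : ℝ | ∃ j : ℤ, |j| < (N : ℤ) ∧ j % 2 = ((N : ℤ) - 1) % 2 ∧ x = (j : ℝ)} := by
  ext x
  constructor
  · rintro ⟨l, rfl⟩
    refine ⟨N - (2 * l + 1), ?_, by omega, by push_cast; ring⟩
    rw [abs_lt]
    omega
  · rintro ⟨j, hj, hpar, rfl⟩
    rw [abs_lt] at hj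
    refine ⟨⟨((N - 1 - j) / 2).toNat, by omega⟩, ?_⟩
    have : ((N : ℤ) - (2 * ((N - 1 - j) / 2).toNat + 1) : ℤ) = j := by omega
    dsimp only
    exact_mod_cast this

theorem spectrum_quant_symmetric_hilbert_general (N : ℕ)
    (C : Matrix (Fin N) (Fin N) ℝ)
    (hC : ∀ m n : Fin N, C m n =
      if Real.sin (π * ((m : ℕ) + (n : ℕ) + 1) / N) = 0 then 0
      else 1 / Real.sin (π * ((m : ℕ) + (n : ℕ) + 1) / N)) :
    spectrum ℝ C =
      {x : ℝ | ∃ j : ℤ, |j| < (N : ℤ) ∧ j % 2 = ((N : ℤ) - 1) % 2 ∧ x = (j : ℝ)} := by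
  obtain rfl : C = quantHilbert N := by
    ext m n
    rw [hC, quantHilbert, of_apply, one_div]
    split_ifs with h <;> simp [h]
  rw [← range_natCast_sub_two_mul_add_one]
  refine spectrum_eq_range_of_mulVec_eq_smul (fun a b hab => Fin.ext ?_)
    (v := fun l => quantEigenvector N l) (fun l => quantHilbert_mulVec_quantEigenvector l.isLt)
    (fun l => quantEigenvector_ne_zero l.isLt) le_rfl
  exact_mod_cast (by linarith : ((a : ℕ) : ℝ) = b)

theorem spectrum_quant_symmetric_hilbert (N : ℕ) (hN : 2 ≤ N)
    (C : Matrix (Fin N) (Fin N) ℝ)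
    (hC : ∀ m n : Fin N, C m n =
      if Real.sin (π * ((m : ℕ) + (n : ℕ) + 1) / N) = 0 then 0
      else 1 / Real.sin (π * ((m : ℕ) + (n : ℕ) + 1) / N)) :
    spectrum ℝ C =
      {x : ℝ | ∃ j : ℤ, |j| < (N : ℤ) ∧ j % 2 = ((N : ℤ) - 1) % 2 ∧ x = (j : ℝ)} :=
  spectrum_quant_symmetric_hilbert_general N C hC
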